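/- arXiv:1602.05611 — 2 statements merged into one kernel-verified Lean document; each statement's English description precedes it below -/
import Mathlib

section
/- Let w : ℝ → ℝ be continuously differentiable and 1-periodic with ω₊ = max w' > 0 and ω₋ = min w' < 0, and let a ∈ ℝ satisfy 1/ω₋ < -a < 1/ω₊. Define g(p) = p + a·w(p). Then g is strictly increasing, hence a bijection of ℝ, and the function W(z) = w(g⁻¹(z)) is differentiable with max W' = ω₊/(1 + a·ω₊) and min W' = ω₋/(1 + a·ω₋). -/
/-! Since `g' = 1 + a w'` is affine in `w' ∈ [ω₋, ω₊]` and positive at both ends, `g'` is bounded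
below by a positive constant, so `g` is a strictly increasing bijection of `ℝ`. By the inverse
function rule `W' = φ ∘ w' ∘ g⁻¹` with `φ t = t / (1 + a t)`, which is increasing wherever
`1 + a t > 0`; hence `φ` carries the extreme values of `w'` to those of `W'`. -/

open Set Function Filter

lemma min_le_one_add_mul {a m M t : ℝ} (ht : t ∈ Icc m M) :
    min (1 + a * m) (1 + a * M) ≤ 1 + a * t := by
  rcases le_total 0 a with ha | ha
  · exact (min_le_left _ _).trans (by nlinarith [ht.1])
  · exact (min_le_right _ _).trans (by nlinarith [ht.2])

lemma monotoneOn_div_one_add_mul (a : ℝ) :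
    MonotoneOn (fun t => t / (1 + a * t)) {t | 0 < 1 + a * t} := by
  intro s hs t ht hst
  rw [div_le_div_iff₀ hs ht]
  linarith

lemma surjective_of_le_deriv {f : ℝ → ℝ} {c : ℝ} (hf : Differentiable ℝ f) (hc : 0 < c)
    (hf' : ∀ x, c ≤ deriv f x) : Surjective f := by
  have hgrowth := mul_sub_le_image_sub_of_le_deriv hf hf'
  refine hf.continuous.surjective ?_ ?_
  · refine tendsto_atTop_mono' _ ?_
      (tendsto_atTop_add_const_left _ (f 0) (tendsto_id.const_mul_atTop hc))
    filter_upwards [eventually_ge_atTop 0] with x hx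
    rw [id_eq]
    linarith [hgrowth hx]
  · refine tendsto_atBot_mono' _ ?_
      (tendsto_atBot_add_const_left _ (f 0) (tendsto_id.const_mul_atBot hc))
    filter_upwards [eventually_le_atBot 0] with x hx
    rw [id_eq]
    linarith [hgrowth hx]

lemma StrictMono.continuous_invFun {α β : Type*} [LinearOrder α] [TopologicalSpace α]
    [OrderTopology α] [Nonempty α] [LinearOrder β] [TopologicalSpace β] [OrderTopology β]
    {g : α → β} (hg : StrictMono g) (hs : Surjective g) : Continuous (invFun g) := by
  let e := hg.orderIsoOfSurjective g hs
  have he : invFun g = e.symm := funext fun z =>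
    hg.injective ((rightInverse_invFun hs z).trans (e.apply_symm_apply z).symm)
  rw [he]
  exact e.symm.continuous

lemma StrictMono.hasDerivAt_invFun {g : ℝ → ℝ} {g' z : ℝ} (hg : StrictMono g)
    (hs : Surjective g) (hd : HasDerivAt g g' (invFun g z)) (h0 : g' ≠ 0) :
    HasDerivAt (invFun g) g'⁻¹ z :=
  .of_local_left_inverse (hg.continuous_invFun hs).continuousAt hd h0
    (.of_forall (rightInverse_invFun hs))

theorem stmt_0_general (w : ℝ → ℝ) (hw : ContDiff ℝ 1 w)
    (ωp ωm : ℝ)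
    (hmax : IsGreatest (Set.range (deriv w)) ωp) (hωp : 0 < ωp)
    (hmin : IsLeast (Set.range (deriv w)) ωm) (hωm : ωm < 0)
    (a : ℝ) (ha₁ : 1 / ωm < -a) (ha₂ : -a < 1 / ωp)
    (g : ℝ → ℝ) (hg : ∀ p, g p = p + a * w p)
    (W : ℝ → ℝ) (hW : ∀ z, W z = w (Function.invFun g z)) :
    StrictMono g ∧ Function.Bijective g ∧ Differentiable ℝ W ∧
      IsGreatest (Set.range (deriv W)) (ωp / (1 + a * ωp)) ∧
      IsLeast (Set.range (deriv W)) (ωm / (1 + a * ωm)) := by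
  have hwd : Differentiable ℝ w := hw.differentiable one_ne_zero
  have hc : 0 < min (1 + a * ωm) (1 + a * ωp) := lt_min
    (by linarith [(div_lt_iff_of_neg hωm).mp ha₁]) (by linarith [(lt_div_iff₀ hωp).mp ha₂])
  have hg'_ge : ∀ p, min (1 + a * ωm) (1 + a * ωp) ≤ 1 + a * deriv w p := fun p =>
    min_le_one_add_mul ⟨hmin.2 ⟨p, rfl⟩, hmax.2 ⟨p, rfl⟩⟩
  have hg' : ∀ p, HasDerivAt g (1 + a * deriv w p) p := fun p => by
    rw [show g = _ from funext hg]
    exact (hasDerivAt_id p).add ((hwd p).hasDerivAt.const_mul a)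
  have hmono : StrictMono g :=
    strictMono_of_deriv_pos fun p => (hg' p).deriv ▸ hc.trans_le (hg'_ge p)
  have hsurj : Surjective g := surjective_of_le_deriv (fun p => (hg' p).differentiableAt) hc
    fun p => (hg' p).deriv ▸ hg'_ge p
  have hW' : ∀ z, HasDerivAt W (deriv w (invFun g z) / (1 + a * deriv w (invFun g z))) z := by
    intro z
    rw [show W = w ∘ invFun g from funext hW, div_eq_mul_inv]
    exact (hwd _).hasDerivAt.comp z
      (hmono.hasDerivAt_invFun hsurj (hg' _) (hc.trans_le (hg'_ge _)).ne')
  have hrange : range (deriv W) = (fun t => t / (1 + a * t)) '' range (deriv w) := by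
    rw [show deriv W = (fun t => t / (1 + a * t)) ∘ deriv w ∘ invFun g from
      funext fun z => (hW' z).deriv, range_comp,
      (leftInverse_invFun hmono.injective).surjective.range_comp]
  have hφ : MonotoneOn (fun t => t / (1 + a * t)) (range (deriv w)) :=
    (monotoneOn_div_one_add_mul a).mono (by rintro _ ⟨p, rfl⟩; exact hc.trans_le (hg'_ge p))
  refine ⟨hmono, ⟨hmono.injective, hsurj⟩, fun z => (hW' z).differentiableAt, ?_, ?_⟩
  · exact hrange ▸ hφ.map_isGreatest hmax
  · exact hrange ▸ hφ.map_isLeast hmin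

/-- Lemma (slanted-spring change of variables): if `w` is `C¹`, 1-periodic, with
`max w' = ω₊ > 0`, `min w' = ω₋ < 0`, and `1/ω₋ < -a < 1/ω₊`, then `g p = p + a * w p`
is strictly increasing, hence bijective, and `W z = w (g⁻¹ z)` is differentiable with
`max W' = ω₊/(1+a·ω₊)` and `min W' = ω₋/(1+a·ω₋)`. -/
theorem stmt_0 (w : ℝ → ℝ) (hw : ContDiff ℝ 1 w)
    (hper : ∀ x, w (x + 1) = w x)
    (ωp ωm : ℝ)
    (hmax : IsGreatest (Set.range (deriv w)) ωp) (hωp : 0 < ωp)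
    (hmin : IsLeast (Set.range (deriv w)) ωm) (hωm : ωm < 0)
    (a : ℝ) (ha₁ : 1 / ωm < -a) (ha₂ : -a < 1 / ωp)
    (g : ℝ → ℝ) (hg : ∀ p, g p = p + a * w p)
    (W : ℝ → ℝ) (hW : ∀ z, W z = w (Function.invFun g z)) :
    StrictMono g ∧ Function.Bijective g ∧ Differentiable ℝ W ∧
      IsGreatest (Set.range (deriv W)) (ωp / (1 + a * ωp)) ∧
      IsLeast (Set.range (deriv W)) (ωm / (1 + a * ωm)) :=
  stmt_0_general w hw ωp ωm hmax hωp hmin hωm a ha₁ ha₂ g hg W hW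
end

section
/- Let W' : ℝ → ℝ be continuous, 1-periodic, with ∫₀¹ W'(y) dy = 0, and image equal to Ω₀ = [ρ₋, ρ₊] with ρ₋ < 0 < ρ₊. Define K(ξ) = ∫₀¹ |ξ − W'(y)| dy. Then K(ξ) > |ξ| for all ξ in the open interval (ρ₋, ρ₊), and K(ξ) = |ξ| for all ξ ∉ (ρ₋, ρ₊). -/
open Set intervalIntegral

private lemma aux_int_pos (g : ℝ → ℝ) (hg : Continuous g) (hnn : ∀ y, 0 ≤ g y)
    (y₀ : ℝ) (hy₀ : y₀ ∈ Set.Icc (0:ℝ) 1) (hpos : 0 < g y₀) :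
    0 < ∫ y in (0:ℝ)..1, g y := by
  rw [intervalIntegral.integral_pos_iff_support_of_nonneg_ae'
    (Filter.Eventually.of_forall fun y => hnn y)
    ((hg.intervalIntegrable 0 1))]
  refine ⟨one_pos, ?_⟩
  have hopen : IsOpen (Function.support g ∩ Set.Ioo (0:ℝ) 1) :=
    (hg.isOpen_support).inter isOpen_Ioo
  have hmem : y₀ ∈ Function.support g := hpos.ne'
  have hclos : y₀ ∈ closure (Set.Ioo (0:ℝ) 1) := by
    rw [closure_Ioo one_ne_zero.symm]; exact hy₀
  have hne : (Function.support g ∩ Set.Ioo (0:ℝ) 1).Nonempty := by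
    rcases _root_.mem_closure_iff.1 hclos _ hg.isOpen_support hmem with ⟨z, hz1, hz2⟩
    exact ⟨z, hz1, hz2⟩
  exact lt_of_lt_of_le (hopen.measure_pos MeasureTheory.volume hne)
    (MeasureTheory.measure_mono (Set.inter_subset_inter_right _ Set.Ioo_subset_Ioc_self))

/-- Properties of `K(ξ) = ∫₀¹ |ξ − W'(y)| dy` for `W'` continuous, 1-periodic, of zero
mean, with range `[ρ₋, ρ₊]`, `ρ₋ < 0 < ρ₊`: `K(ξ) > |ξ|` inside `(ρ₋, ρ₊)` and
`K(ξ) = |ξ|` outside. -/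
theorem stmt_6 (W' : ℝ → ℝ) (hc : Continuous W')
    (hper : ∀ y, W' (y + 1) = W' y)
    (hmean : ∫ y in (0:ℝ)..1, W' y = 0)
    (ρp ρm : ℝ) (hρm : ρm < 0) (hρp : 0 < ρp)
    (hrange : Set.range W' = Set.Icc ρm ρp)
    (K : ℝ → ℝ) (hK : ∀ ξ, K ξ = ∫ y in (0:ℝ)..1, |ξ - W' y|) :
    (∀ ξ ∈ Set.Ioo ρm ρp, |ξ| < K ξ) ∧
      (∀ ξ : ℝ, ξ ∉ Set.Ioo ρm ρp → K ξ = |ξ|) := by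
  have hPer : Function.Periodic W' 1 := hper
  have hbd : ∀ y, ρm ≤ W' y ∧ W' y ≤ ρp := fun y => by
    have : W' y ∈ Set.Icc ρm ρp := hrange ▸ Set.mem_range_self y
    exact ⟨this.1, this.2⟩
  have hWint : IntervalIntegrable W' MeasureTheory.volume 0 1 := hc.intervalIntegrable 0 1
  -- find points in [0,1] attaining the extreme values
  have hattain : ∀ v ∈ Set.Icc ρm ρp, ∃ y₀ ∈ Set.Icc (0:ℝ) 1, W' y₀ = v := by
    intro v hv
    rw [← hrange] at hv
    obtain ⟨x, hx⟩ := hv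
    refine ⟨Int.fract x, ⟨Int.fract_nonneg x, (Int.fract_lt_one x).le⟩, ?_⟩
    have := hPer.sub_int_mul_eq (x := x) (n := ⌊x⌋)
    rw [mul_one] at this
    rw [Int.fract, this, hx]
  constructor
  · rintro ξ ⟨hξm, hξp⟩
    rw [hK]
    rcases le_or_gt 0 ξ with h0 | h0
    · -- ξ ≥ 0 : compare with ∫ (ξ - W') = ξ
      obtain ⟨y₀, hy₀, hW0⟩ := hattain ρp ⟨le_of_lt (hρm.trans hρp), le_refl _⟩
      set g : ℝ → ℝ := fun y => |ξ - W' y| - (ξ - W' y) with hg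
      have hgc : Continuous g := ((continuous_const.sub hc).abs).sub (continuous_const.sub hc)
      have hgnn : ∀ y, 0 ≤ g y := fun y => sub_nonneg.2 (le_abs_self _)
      have hgpos : 0 < g y₀ := by
        simp only [hg, hW0]
        have h1 : ξ - ρp < 0 := sub_neg.2 hξp
        rw [abs_of_neg h1]; linarith
      have hpos := aux_int_pos g hgc hgnn y₀ hy₀ hgpos
      have hsplit : (∫ y in (0:ℝ)..1, g y)
          = (∫ y in (0:ℝ)..1, |ξ - W' y|) - ∫ y in (0:ℝ)..1, (ξ - W' y) := by
        exact intervalIntegral.integral_sub (((continuous_const.sub hc).abs).intervalIntegrable 0 1)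
          ((continuous_const.sub hc).intervalIntegrable 0 1)
      have hlin : (∫ y in (0:ℝ)..1, (ξ - W' y)) = ξ := by
        rw [intervalIntegral.integral_sub (intervalIntegrable_const) hWint, hmean,
          intervalIntegral.integral_const]
        simp
      rw [hsplit, hlin] at hpos
      rw [abs_of_nonneg h0]; linarith
    · -- ξ < 0 : compare with ∫ (W' - ξ) = -ξ
      obtain ⟨y₀, hy₀, hW0⟩ := hattain ρm ⟨le_refl _, le_of_lt (hρm.trans hρp)⟩
      set g : ℝ → ℝ := fun y => |ξ - W' y| - (W' y - ξ) with hg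
      have hgc : Continuous g := ((continuous_const.sub hc).abs).sub (hc.sub continuous_const)
      have hgnn : ∀ y, 0 ≤ g y := fun y => by
        have := neg_abs_le (ξ - W' y)
        simp only [hg]
        have : -(|ξ - W' y|) ≤ ξ - W' y := neg_abs_le _
        linarith
      have hgpos : 0 < g y₀ := by
        simp only [hg, hW0]
        have h1 : 0 < ξ - ρm := sub_pos.2 hξm
        rw [abs_of_pos h1]; linarith
      have hpos := aux_int_pos g hgc hgnn y₀ hy₀ hgpos
      have hsplit : (∫ y in (0:ℝ)..1, g y)
          = (∫ y in (0:ℝ)..1, |ξ - W' y|) - ∫ y in (0:ℝ)..1, (W' y - ξ) := by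
        exact intervalIntegral.integral_sub (((continuous_const.sub hc).abs).intervalIntegrable 0 1)
          ((hc.sub continuous_const).intervalIntegrable 0 1)
      have hlin : (∫ y in (0:ℝ)..1, (W' y - ξ)) = -ξ := by
        rw [intervalIntegral.integral_sub hWint (intervalIntegrable_const), hmean,
          intervalIntegral.integral_const]
        simp
      rw [hsplit, hlin] at hpos
      rw [abs_of_neg h0]; linarith
  · intro ξ hξ
    rw [Set.mem_Ioo, not_and_or, not_lt, not_lt] at hξ
    rcases hξ with h | h
    · -- ξ ≤ ρm < 0
      have habs : ∀ y, |ξ - W' y| = W' y - ξ := fun y => by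
        rw [abs_sub_comm]; exact abs_of_nonneg (sub_nonneg.2 (h.trans (hbd y).1))
      rw [hK]
      simp only [habs]
      rw [intervalIntegral.integral_sub hWint (intervalIntegrable_const), hmean,
        intervalIntegral.integral_const, abs_of_neg (lt_of_le_of_lt h hρm)]
      simp
    · -- ρp ≤ ξ, so 0 < ξ
      have habs : ∀ y, |ξ - W' y| = ξ - W' y := fun y =>
        abs_of_nonneg (sub_nonneg.2 ((hbd y).2.trans h))
      rw [hK]
      simp only [habs]
      rw [intervalIntegral.integral_sub (intervalIntegrable_const) hWint, hmean,
        intervalIntegral.integral_const, abs_of_pos (hρp.trans_le h)]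
      simp
end
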